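/- arXiv:2102.09352 — 5 statements merged into one kernel-verified Lean document; each statement's English description precedes it below -/
import Mathlib

section
/- Let f ∈ Diff¹_ω(D) and let A : D → ℝ be a C¹ function such that dA_z = λ_{f(z)}∘Df_z − λ_z for every z ∈ D (i.e. dA = f*λ − λ). Then for any two Borel probability measures μ and ν on S¹ that are invariant under f|_{S¹}, one has ∫_{S¹} A dμ = ∫_{S¹} A dν. -/
open MeasureTheory Metric Set Filter Topology
open scoped Real

noncomputable section

/-- The closed unit disk in `ℂ ≅ ℝ²`. -/
def Disk : Set ℂ := Metric.closedBall 0 1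

/-- The unit circle, boundary of the closed unit disk. -/
def Circ : Set ℂ := Metric.sphere 0 1

/-- The standard Liouville form `λ_z(w) = (z₁ w₂ - z₂ w₁)/(2π)`, whose exterior
derivative is the normalized area form `ω = (1/π) du ∧ dv`. -/
def lform (z w : ℂ) : ℝ := (z.re * w.im - z.im * w.re) / (2 * Real.pi)

/-- An element of `Diff¹_ω(D)`: a `C¹` diffeomorphism of the closed unit disk onto itself
whose Jacobian determinant equals `1` at every point. -/
structure SympDiff where
  toFun : ℂ → ℂ
  invFun : ℂ → ℂ
  mapsTo : Set.MapsTo toFun Disk Disk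
  inv_mapsTo : Set.MapsTo invFun Disk Disk
  left_inv : ∀ z ∈ Disk, invFun (toFun z) = z
  right_inv : ∀ z ∈ Disk, toFun (invFun z) = z
  contDiffOn : ContDiffOn ℝ 1 toFun Disk
  inv_contDiffOn : ContDiffOn ℝ 1 invFun Disk
  jacobian : ∀ z ∈ Disk,
    LinearMap.det (fderivWithin ℝ toFun Disk z).toLinearMap = 1

/-- `A` is an action function of `f`: a `C¹` function with `dA = f*λ - λ` on the disk. -/
def IsAction (f : SympDiff) (A : ℂ → ℝ) : Prop :=
  ContDiffOn ℝ 1 A Disk ∧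
    ∀ z ∈ Disk, ∀ w : ℂ,
      fderivWithin ℝ A Disk z w =
        lform (f.toFun z) (fderivWithin ℝ f.toFun Disk z w) - lform z w

/-- `μ` is a Borel probability measure concentrated on the unit circle and invariant
under `f|_{S¹}`. -/
def IsInvariantCircleMeasure (f : SympDiff) (μ : Measure ℂ) : Prop :=
  IsProbabilityMeasure μ ∧ μ Circᶜ = 0 ∧ Measure.map f.toFun μ = μ

/-- `A` is a normalized action function of `f`: an action function whose integral over the
circle with respect to some `f|_{S¹}`-invariant probability measure vanishes. -/
def IsNormalizedAction (f : SympDiff) (A : ℂ → ℝ) : Prop :=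
  IsAction f A ∧
    ∃ μ : Measure ℂ, IsInvariantCircleMeasure f μ ∧ ∫ z, A z ∂μ = 0

/-- The `C⁰` distance between two disk diffeomorphisms (given with their inverses). -/
def d0 (f fi g gi : ℂ → ℂ) : ℝ :=
  max (⨆ z : Disk, ‖f (z : ℂ) - g (z : ℂ)‖) (⨆ z : Disk, ‖fi (z : ℂ) - gi (z : ℂ)‖)

/-- The `C¹` distance between two disk diffeomorphisms (given with their inverses). -/
def d1 (f fi g gi : ℂ → ℂ) : ℝ :=
  max (d0 f fi g gi)
    (max (⨆ z : Disk, ‖fderivWithin ℝ f Disk (z : ℂ) - fderivWithin ℝ g Disk (z : ℂ)‖)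
      (⨆ z : Disk, ‖fderivWithin ℝ fi Disk (z : ℂ) - fderivWithin ℝ gi Disk (z : ℂ)‖))

/-!
On the circle `c(θ) = e^{iθ}`, an action `B` of a map `g ∈ Diff¹_ω(D)` satisfies
`d/dθ (2π B(c θ) + θ) = 2π λ_{g(c θ)}((g ∘ c)'(θ))`, the angular speed of `g ∘ c`. This never
vanishes, so by Darboux's theorem and the `2π`-periodicity of `B ∘ c`, `φ(θ) = 2π B(c θ) + θ` is
an increasing lift of degree one. Hence `φ(θ) - θ` oscillates by at most `2π`, i.e. `B` by at
most `1`, on the circle. The Birkhoff sums `Bₙ = ∑_{k<n} A ∘ fᵏ` are actions of `fⁿ`, and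
invariance gives `∫ Bₙ dμ = n ∫ A dμ`; comparing both integrals with `Bₙ(1)` yields
`n |∫ A dμ - ∫ A dν| ≤ 2` for every `n`.
-/

open Function

lemma uniqueDiffOn_disk : UniqueDiffOn ℝ Disk :=
  uniqueDiffOn_convex (convex_closedBall 0 1) <| by
    rw [Disk, interior_closedBall _ one_ne_zero]; exact nonempty_ball.2 one_pos

lemma disk_mem_nhds {z : ℂ} (hz : z ∈ ball (0 : ℂ) 1) : Disk ∈ 𝓝 z :=
  mem_of_superset (isOpen_ball.mem_nhds hz) ball_subset_closedBall

lemma circ_subset_disk : Circ ⊆ Disk := sphere_subset_closedBall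

lemma image_circleMap_Ioc_eq_circ : circleMap 0 1 '' Ioc 0 (2 * π) = Circ := by
  rw [image_circleMap_Ioc, abs_one]; rfl

lemma HasStrictFDerivAt.mem_interior_of_mapsTo {𝕜 E F : Type*} [NontriviallyNormedField 𝕜]
    [NormedAddCommGroup E] [NormedSpace 𝕜 E] [CompleteSpace E] [NormedAddCommGroup F]
    [NormedSpace 𝕜 F] {g : E → F} {g' : E ≃L[𝕜] F} {s : Set E} {t : Set F} {y : E}
    (hg : HasStrictFDerivAt g (g' : E →L[𝕜] F) y) (hs : s ∈ 𝓝 y) (hst : MapsTo g s t) :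
    g y ∈ interior t := by
  rw [mem_interior_iff_mem_nhds, ← hg.map_nhds_eq_of_equiv]
  exact mem_map.2 (mem_of_superset hs fun x hx => hst hx)

namespace SympDiff

variable (f : SympDiff)

lemma differentiableOn : DifferentiableOn ℝ f.toFun Disk :=
  f.contDiffOn.differentiableOn one_ne_zero

lemma fderivWithin_comp_toFun {F : Type*} [NormedAddCommGroup F] [NormedSpace ℝ F] {h : ℂ → F}
    (hh : DifferentiableOn ℝ h Disk) {z : ℂ} (hz : z ∈ Disk) :
    fderivWithin ℝ (h ∘ f.toFun) Disk z =
      (fderivWithin ℝ h Disk (f.toFun z)).comp (fderivWithin ℝ f.toFun Disk z) :=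
  fderivWithin_comp z (hh _ (f.mapsTo hz)) (f.differentiableOn z hz) f.mapsTo
    (uniqueDiffOn_disk z hz)

lemma fderivWithin_injective {z : ℂ} (hz : z ∈ Disk) :
    Injective (fderivWithin ℝ f.toFun Disk z) :=
  (LinearMap.equivOfDetNeZero _ (by simp [f.jacobian z hz])).injective

lemma invFun_mem_ball {y : ℂ} (hy : y ∈ ball (0 : ℂ) 1) : f.invFun y ∈ ball (0 : ℂ) 1 := by
  have hyD : y ∈ Disk := ball_subset_closedBall hy
  have hinv : HasStrictFDerivAt f.invFun (fderiv ℝ f.invFun y) y :=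
    (f.inv_contDiffOn.contDiffAt (disk_mem_nhds hy)).hasStrictFDerivAt one_ne_zero
  have hcomp : (fderivWithin ℝ f.toFun Disk (f.invFun y)).comp (fderiv ℝ f.invFun y) =
      ContinuousLinearMap.id ℝ ℂ :=
    (uniqueDiffOn_disk y hyD).eq
      ((f.differentiableOn _ (f.inv_mapsTo hyD)).hasFDerivWithinAt.comp y
        hinv.hasFDerivAt.hasFDerivWithinAt f.inv_mapsTo)
      ((hasFDerivWithinAt_id y Disk).congr (fun w hw => f.right_inv w hw) (f.right_inv y hyD))
  have hdet : (fderiv ℝ f.invFun y).det ≠ 0 := by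
    refine right_ne_zero_of_mul_eq_one (a := (fderivWithin ℝ f.toFun Disk (f.invFun y)).det) ?_
    rw [ContinuousLinearMap.det, ContinuousLinearMap.det, ← LinearMap.det_comp,
      ← ContinuousLinearMap.toLinearMap_comp, hcomp]
    simp
  rw [← interior_closedBall (0 : ℂ) one_ne_zero]
  refine HasStrictFDerivAt.mem_interior_of_mapsTo
    (g' := (fderiv ℝ f.invFun y).toContinuousLinearEquivOfDetNeZero hdet) ?_
    (disk_mem_nhds hy) f.inv_mapsTo
  simpa using hinv

lemma mapsTo_circ : MapsTo f.toFun Circ Circ := by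
  intro z hz
  have hzD := circ_subset_disk hz
  rw [Circ, ← closedBall_sdiff_ball]
  refine ⟨f.mapsTo hzD, fun hball => ?_⟩
  have := f.invFun_mem_ball hball
  rw [f.left_inv z hzD, mem_ball] at this
  exact this.ne (mem_sphere.1 hz)

protected def id : SympDiff where
  toFun := id
  invFun := id
  mapsTo := mapsTo_id _
  inv_mapsTo := mapsTo_id _
  left_inv _ _ := rfl
  right_inv _ _ := rfl
  contDiffOn := contDiffOn_id
  inv_contDiffOn := contDiffOn_id
  jacobian z hz := by simp [fderivWithin_id (uniqueDiffOn_disk z hz)]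

def comp (g f : SympDiff) : SympDiff where
  toFun := g.toFun ∘ f.toFun
  invFun := f.invFun ∘ g.invFun
  mapsTo := g.mapsTo.comp f.mapsTo
  inv_mapsTo := f.inv_mapsTo.comp g.inv_mapsTo
  left_inv z hz := by simp [g.left_inv _ (f.mapsTo hz), f.left_inv z hz]
  right_inv z hz := by simp [f.right_inv _ (g.inv_mapsTo hz), g.right_inv z hz]
  contDiffOn := g.contDiffOn.comp f.contDiffOn f.mapsTo
  inv_contDiffOn := f.inv_contDiffOn.comp g.inv_contDiffOn g.inv_mapsTo
  jacobian z hz := by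
    rw [f.fderivWithin_comp_toFun g.differentiableOn hz, ContinuousLinearMap.toLinearMap_comp,
      LinearMap.det_comp, g.jacobian _ (f.mapsTo hz), f.jacobian z hz, one_mul]

def iterate : ℕ → SympDiff
  | 0 => SympDiff.id
  | n + 1 => (iterate n).comp f

lemma iterate_toFun (n : ℕ) : (f.iterate n).toFun = f.toFun^[n] := by
  induction n with
  | zero => rfl
  | succ n ih => rw [iterate_succ, ← ih]; rfl

end SympDiff

lemma isAction_id : IsAction SympDiff.id 0 := by
  refine ⟨contDiffOn_const, fun z hz w => ?_⟩
  simp [SympDiff.id, fderivWithin_id (uniqueDiffOn_disk z hz)]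

namespace IsAction

variable {f g : SympDiff} {A C : ℂ → ℝ}

lemma comp (hA : IsAction f A) (hC : IsAction g C) :
    IsAction (g.comp f) (A + C ∘ f.toFun) := by
  have hCf : ContDiffOn ℝ 1 (C ∘ f.toFun) Disk := hC.1.comp f.contDiffOn f.mapsTo
  refine ⟨hA.1.add hCf, fun z hz w => ?_⟩
  show _ = lform (g.toFun (f.toFun z)) (fderivWithin ℝ (g.toFun ∘ f.toFun) Disk z w) - lform z w
  rw [fderivWithin_add (uniqueDiffOn_disk z hz) (hA.1.differentiableOn one_ne_zero z hz)
      (hCf.differentiableOn one_ne_zero z hz), add_apply,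
    f.fderivWithin_comp_toFun (hC.1.differentiableOn one_ne_zero) hz,
    f.fderivWithin_comp_toFun g.differentiableOn hz, ContinuousLinearMap.comp_apply,
    ContinuousLinearMap.comp_apply, hA.2 z hz w, hC.2 _ (f.mapsTo hz)]
  ring

lemma iterate (hA : IsAction f A) (n : ℕ) :
    IsAction (f.iterate n) (birkhoffSum f.toFun A n) := by
  induction n with
  | zero => rw [birkhoffSum_zero']; exact isAction_id
  | succ n ih =>
    rw [show birkhoffSum f.toFun A (n + 1) = A + birkhoffSum f.toFun A n ∘ f.toFun
      from funext (birkhoffSum_succ' _ _ n)]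
    exact hA.comp ih

end IsAction

lemma circleMap_mem_circ (θ : ℝ) : circleMap 0 1 θ ∈ Circ :=
  circleMap_mem_sphere 0 zero_le_one θ

lemma circleMap_mem_disk (θ : ℝ) : circleMap 0 1 θ ∈ Disk :=
  circ_subset_disk (circleMap_mem_circ θ)

lemma hasDerivAt_comp_circleMap {F : Type*} [NormedAddCommGroup F] [NormedSpace ℝ F]
    {h : ℂ → F} (hh : DifferentiableOn ℝ h Disk) (θ : ℝ) :
    HasDerivAt (h ∘ circleMap 0 1)
      (fderivWithin ℝ h Disk (circleMap 0 1 θ) (circleMap 0 1 θ * Complex.I)) θ :=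
  (hh _ (circleMap_mem_disk θ)).hasFDerivWithinAt.comp_hasDerivAt θ (hasDerivAt_circleMap 0 1 θ)
    (Eventually.of_forall circleMap_mem_disk)

lemma lform_mul_I (z : ℂ) : lform z (z * Complex.I) = ‖z‖ ^ 2 / (2 * π) := by
  simp [lform, Complex.sq_norm, Complex.normSq_apply]

lemma lform_ne_zero_of_hasDerivAt {u : ℝ → ℂ} {u' : ℂ} {θ : ℝ} (hu : HasDerivAt u u' θ)
    (hnorm : ∀ t, ‖u t‖ = 1) (hu' : u' ≠ 0) : lform (u θ) u' ≠ 0 := by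
  have horth : u'.re * (u θ).re + u'.im * (u θ).im = 0 := by
    have h := hu.norm_sq
    simp only [hnorm, one_pow] at h
    have := h.unique (hasDerivAt_const θ 1)
    simpa [Complex.inner] using this
  have hunit : (u θ).re ^ 2 + (u θ).im ^ 2 = 1 := by
    rw [sq, sq, ← Complex.normSq_apply, Complex.normSq_eq_norm_sq, hnorm, one_pow]
  have hpos : u'.re ^ 2 + u'.im ^ 2 ≠ 0 := by
    simpa [Complex.normSq_apply, sq] using Complex.normSq_pos.2 hu' |>.ne'
  refine div_ne_zero (fun hcross => hpos ?_) (by positivity)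
  -- Lagrange's identity: `cross² + dot² = ‖u θ‖² ‖u'‖²`.
  linear_combination (-(u'.re ^ 2 + u'.im ^ 2)) * hunit
    + ((u θ).re * u'.im - (u θ).im * u'.re) * hcross + (u'.re * (u θ).re + u'.im * (u θ).im) * horth

lemma strictMono_of_hasDerivAt_ne_zero {φ φ' : ℝ → ℝ} {p : ℝ}
    (hφ : ∀ x, HasDerivAt φ (φ' x) x) (hφ' : ∀ x, φ' x ≠ 0) (hp : 0 < p)
    (hper : ∀ x, φ (x + p) = φ x + p) : StrictMono φ := by
  rcases hasDerivWithinAt_forall_lt_or_forall_gt_of_forall_ne convex_univ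
    (fun x _ => (hφ x).hasDerivWithinAt) (fun x _ => hφ' x) with hneg | hpos
  · have := strictAnti_of_hasDerivAt_neg hφ (fun x => hneg x trivial) (lt_add_of_pos_right 0 hp)
    rw [hper] at this
    linarith
  · exact strictMono_of_hasDerivAt_pos hφ fun x => hpos x trivial

lemma abs_sub_sub_le_of_monotone {φ : ℝ → ℝ} {p a b : ℝ} (hφ : Monotone φ)
    (hper : ∀ x, φ (x + p) = φ x + p) (hab : |b - a| ≤ p) :
    |(φ b - b) - (φ a - a)| ≤ p := by
  wlog h : a ≤ b generalizing a b
  · rw [abs_sub_comm] at hab ⊢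
    exact this hab (le_of_not_ge h)
  have hba : b ≤ a + p := by linarith [le_abs_self (b - a)]
  have h1 := hφ h
  have h2 : φ b ≤ φ a + p := hper a ▸ hφ hba
  rw [abs_le]
  constructor <;> linarith

namespace IsAction

variable {f : SympDiff} {A : ℂ → ℝ}

lemma hasDerivAt_lift (hA : IsAction f A) (θ : ℝ) :
    HasDerivAt (fun t => 2 * π * A (circleMap 0 1 t) + t)
      (2 * π * lform (f.toFun (circleMap 0 1 θ))
        (fderivWithin ℝ f.toFun Disk (circleMap 0 1 θ) (circleMap 0 1 θ * Complex.I))) θ := by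
  refine (((hasDerivAt_comp_circleMap (hA.1.differentiableOn one_ne_zero) θ).const_mul
    (2 * π)).add (hasDerivAt_id θ)).congr_deriv ?_
  rw [hA.2 _ (circleMap_mem_disk θ), lform_mul_I, norm_circleMap_zero, abs_one]
  field_simp
  ring

theorem abs_sub_le_one (hA : IsAction f A) {z w : ℂ} (hz : z ∈ Circ) (hw : w ∈ Circ) :
    |A z - A w| ≤ 1 := by
  have hspeed : ∀ θ, 2 * π * lform (f.toFun (circleMap 0 1 θ))
      (fderivWithin ℝ f.toFun Disk (circleMap 0 1 θ) (circleMap 0 1 θ * Complex.I)) ≠ 0 := by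
    intro θ
    refine mul_ne_zero (by positivity) (lform_ne_zero_of_hasDerivAt (u := f.toFun ∘ circleMap 0 1)
      (hasDerivAt_comp_circleMap f.differentiableOn θ)
      (fun t => mem_sphere_zero_iff_norm.1 (f.mapsTo_circ (circleMap_mem_circ t))) ?_)
    exact (map_ne_zero_iff _ (f.fderivWithin_injective (circleMap_mem_disk θ))).2
      (mul_ne_zero (circleMap_ne_center one_ne_zero) Complex.I_ne_zero)
  have hper : ∀ θ, 2 * π * A (circleMap 0 1 (θ + 2 * π)) + (θ + 2 * π) =
      2 * π * A (circleMap 0 1 θ) + θ + 2 * π := fun θ => by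
    rw [periodic_circleMap 0 1 θ]
    ring
  have hmono :=
    (strictMono_of_hasDerivAt_ne_zero hA.hasDerivAt_lift hspeed Real.two_pi_pos hper).monotone
  rw [← image_circleMap_Ioc_eq_circ] at hz hw
  obtain ⟨a, ha, rfl⟩ := hz
  obtain ⟨b, hb, rfl⟩ := hw
  have hab : |a - b| ≤ 2 * π :=
    abs_sub_le_iff.2 ⟨by linarith [ha.2, hb.1], by linarith [ha.1, hb.2]⟩
  have h := abs_sub_sub_le_of_monotone hmono hper hab
  rw [show ∀ x y : ℝ, 2 * π * x + a - a - (2 * π * y + b - b) = 2 * π * (x - y) from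
    fun x y => by ring, abs_mul, abs_of_pos Real.two_pi_pos] at h
  exact (mul_le_iff_le_one_right Real.two_pi_pos).1 h

end IsAction

section Invariant

variable {α : Type*} [MeasurableSpace α] {μ : Measure α}

lemma aemeasurable_of_map_eq_self [NeZero μ] {g : α → α} (hmap : μ.map g = μ) :
    AEMeasurable g μ := by
  -- `Measure.map` along a map that is not a.e.-measurable is `0` by convention.
  by_contra h
  exact NeZero.ne μ (hmap ▸ Measure.map_of_not_aemeasurable h)

variable {E : Type*} [NormedAddCommGroup E] [NormedSpace ℝ E] {g : α → α} {F : α → E}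

lemma integral_comp_iterate_of_map_eq (hg : AEMeasurable g μ) (hmap : μ.map g = μ)
    (hF : ∀ n, AEStronglyMeasurable (F ∘ g^[n]) μ) (n : ℕ) :
    ∫ x, F (g^[n] x) ∂μ = ∫ x, F x ∂μ := by
  induction n with
  | zero => rfl
  | succ n ih =>
    calc ∫ x, F (g^[n + 1] x) ∂μ = ∫ x, (F ∘ g^[n]) (g x) ∂μ := rfl
      _ = ∫ x, F (g^[n] x) ∂μ := by rw [← integral_map hg (hmap.symm ▸ hF n), hmap]; rfl
      _ = ∫ x, F x ∂μ := ih

lemma integral_birkhoffSum_of_map_eq (hg : AEMeasurable g μ) (hmap : μ.map g = μ)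
    (hF : ∀ n, Integrable (F ∘ g^[n]) μ) (n : ℕ) :
    ∫ x, birkhoffSum g F n x ∂μ = n • ∫ x, F x ∂μ := by
  simp only [birkhoffSum]
  rw [integral_finsetSum (f := fun k x => F (g^[k] x)) _ fun k _ => hF k]
  simp [integral_comp_iterate_of_map_eq hg hmap fun k => (hF k).aestronglyMeasurable]

end Invariant

lemma ContinuousOn.integrable_of_ae_mem {X E : Type*} [TopologicalSpace X] [MeasurableSpace X]
    [OpensMeasurableSpace X] [T2Space X] [NormedAddCommGroup E] {μ : Measure X}
    [IsFiniteMeasureOnCompacts μ] {K : Set X} {F : X → E} (hF : ContinuousOn F K)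
    (hK : IsCompact K) (hμ : ∀ᵐ x ∂μ, x ∈ K) : Integrable F μ := by
  rw [← Measure.restrict_eq_self_of_ae_mem hμ]
  exact hF.integrableOn_compact hK

lemma abs_integral_sub_le_of_ae_abs_sub_le {α : Type*} [MeasurableSpace α] {μ : Measure α}
    [IsProbabilityMeasure μ] {F : α → ℝ} {c C : ℝ} (hF : Integrable F μ)
    (h : ∀ᵐ x ∂μ, |F x - c| ≤ C) : |∫ x, F x ∂μ - c| ≤ C := by
  have := norm_integral_le_of_norm_le_const (f := fun x => F x - c) h
  rwa [integral_sub hF (integrable_const c), integral_const, probReal_univ, one_smul, mul_one,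
    Real.norm_eq_abs] at this

lemma eq_of_forall_nat_mul_abs_sub_le {x y C : ℝ} (h : ∀ n : ℕ, n * |x - y| ≤ C) : x = y := by
  by_contra hne
  have hpos : 0 < |x - y| := abs_pos.2 (sub_ne_zero.2 hne)
  obtain ⟨n, hn⟩ := exists_nat_gt (C / |x - y|)
  rw [div_lt_iff₀ hpos] at hn
  linarith [h n]

lemma one_mem_circ : (1 : ℂ) ∈ Circ := by simp [Circ]

lemma IsAction.abs_nat_mul_integral_sub_birkhoffSum_le {f : SympDiff} {A : ℂ → ℝ}
    (hA : IsAction f A) {σ : Measure ℂ} (hσ : IsInvariantCircleMeasure f σ) (n : ℕ) :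
    |n * ∫ z, A z ∂σ - birkhoffSum f.toFun A n 1| ≤ 1 := by
  obtain ⟨hσp, hσc, hσm⟩ := hσ
  have hcirc : ∀ᵐ z ∂σ, z ∈ Circ := mem_ae_iff.2 hσc
  have hdisk : ∀ᵐ z ∂σ, z ∈ Disk := hcirc.mono fun z hz => circ_subset_disk hz
  have hAk : ∀ k, Integrable (A ∘ f.toFun^[k]) σ := fun k =>
    (hA.1.continuousOn.comp (f.iterate_toFun k ▸ (f.iterate k).contDiffOn.continuousOn)
      (f.mapsTo.iterate k)).integrable_of_ae_mem (isCompact_closedBall 0 1) hdisk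
  rw [← nsmul_eq_mul, ← integral_birkhoffSum_of_map_eq (aemeasurable_of_map_eq_self hσm) hσm hAk]
  have hB := hA.iterate n
  refine abs_integral_sub_le_of_ae_abs_sub_le
    (hB.1.continuousOn.integrable_of_ae_mem (isCompact_closedBall 0 1) hdisk) ?_
  filter_upwards [hcirc] with z hz
  exact hB.abs_sub_le_one hz one_mem_circ

/-- The integral of an action function over the circle does not depend
on the choice of the invariant probability measure. -/
theorem action_integral_indep_measure (f : SympDiff) (A : ℂ → ℝ) (hA : IsAction f A)
    (μ ν : Measure ℂ) (hμ : IsInvariantCircleMeasure f μ)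
    (hν : IsInvariantCircleMeasure f ν) :
    ∫ z, A z ∂μ = ∫ z, A z ∂ν := by
  refine eq_of_forall_nat_mul_abs_sub_le (C := 2) fun n => ?_
  have hμn := hA.abs_nat_mul_integral_sub_birkhoffSum_le hμ n
  have hνn := hA.abs_nat_mul_integral_sub_birkhoffSum_le hν n
  calc (n : ℝ) * |∫ z, A z ∂μ - ∫ z, A z ∂ν|
      = |(n * ∫ z, A z ∂μ - birkhoffSum f.toFun A n 1) -
          (n * ∫ z, A z ∂ν - birkhoffSum f.toFun A n 1)| := by
        rw [sub_sub_sub_cancel_right, ← mul_sub, abs_mul, Nat.abs_cast]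
    _ ≤ 2 := (abs_sub _ _).trans (by linarith)
end
end

section
/- Let f ∈ Diff¹_ω(D), let u : ℝ² → ℝ be a C¹ function, and set λ' = λ + du. Let A, A' : D → ℝ be C¹ functions with dA = f*λ − λ and dA' = f*λ' − λ' on D, and let μ be an f|_{S¹}-invariant Borel probability measure on S¹ such that ∫_{S¹} A dμ = ∫_{S¹} A' dμ = 0. Then ∫_D A dLeb = ∫_D A' dLeb. -/
/-!
Write `λ' = λ + du`. Both `A'` and `A + (u ∘ f - u)` are primitives of `f*λ' - λ'` on the convex
disk, so they differ by a constant `c`. Integrating against the invariant measure `μ`, the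
coboundary `u ∘ f - u` contributes nothing and both normalizations vanish, so `c = 0`. Integrating
against Lebesgue measure, the coboundary again contributes nothing because `f` preserves area.
-/

open MeasureTheory Metric Set Filter Topology
open scoped Real

noncomputable section

theorem Convex.is_const_of_hasFDerivWithinAt_zero {E G : Type*} [NormedAddCommGroup E]
    [NormedSpace ℝ E] [NormedAddCommGroup G] [NormedSpace ℝ G] {s : Set E} {g : E → G}
    (hs : Convex ℝ s) (hg : ∀ x ∈ s, HasFDerivWithinAt g (0 : E →L[ℝ] G) s x) {x y : E}
    (hx : x ∈ s) (hy : y ∈ s) : g x = g y := by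
  simpa [sub_eq_zero, eq_comm] using
    hs.norm_image_sub_le_of_norm_hasFDerivWithin_le hg (fun _ _ => norm_zero.le) hx hy

theorem isCompact_disk : IsCompact Disk := isCompact_closedBall 0 1

theorem measurableSet_disk : MeasurableSet Disk := measurableSet_closedBall

namespace SympDiff

variable (f : SympDiff)

theorem image_disk : f.toFun '' Disk = Disk :=
  f.mapsTo.image_subset.antisymm fun z hz => ⟨f.invFun z, f.inv_mapsTo hz, f.right_inv z hz⟩

theorem injOn_disk : InjOn f.toFun Disk := fun a ha b hb h => by
  rw [← f.left_inv a ha, ← f.left_inv b hb, h]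

theorem setIntegral_comp (u : ℂ → ℝ) : ∫ z in Disk, u (f.toFun z) = ∫ z in Disk, u z := by
  conv_rhs => rw [← f.image_disk]
  rw [integral_image_eq_integral_abs_det_fderiv_smul volume measurableSet_disk
    (fun z hz => ((f.contDiffOn.differentiableOn one_ne_zero) z hz).hasFDerivWithinAt)
    f.injOn_disk]
  refine setIntegral_congr_fun measurableSet_disk fun z hz => ?_
  simp [ContinuousLinearMap.det, f.jacobian z hz]

theorem setIntegral_add_comp_sub {ν : Measure ℂ} [IsFiniteMeasureOnCompacts ν] {A u : ℂ → ℝ}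
    (hA : ContinuousOn A Disk) (hu : Continuous u)
    (h : ∫ z in Disk, u (f.toFun z) ∂ν = ∫ z in Disk, u z ∂ν) :
    ∫ z in Disk, A z + (u (f.toFun z) - u z) ∂ν = ∫ z in Disk, A z ∂ν := by
  have huf : IntegrableOn (fun z => u (f.toFun z)) Disk ν :=
    (hu.comp_continuousOn f.contDiffOn.continuousOn).integrableOn_compact isCompact_disk
  have hu' : IntegrableOn u Disk ν := hu.continuousOn.integrableOn_compact isCompact_disk
  have hcob : IntegrableOn (fun z => u (f.toFun z) - u z) Disk ν := huf.sub hu'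
  rw [integral_add (hA.integrableOn_compact isCompact_disk) hcob, integral_sub huf hu', h,
    sub_self, add_zero]

end SympDiff

theorem IsAction.exists_eqOn_add_comp_sub_add_const {f : SympDiff} {u A A' : ℂ → ℝ}
    (hA : IsAction f A) (hu : Differentiable ℝ u) (hA'd : DifferentiableOn ℝ A' Disk)
    (hA' : ∀ z ∈ Disk, ∀ w : ℂ,
      fderivWithin ℝ A' Disk z w =
        (lform (f.toFun z) (fderivWithin ℝ f.toFun Disk z w) +
          fderiv ℝ u (f.toFun z) (fderivWithin ℝ f.toFun Disk z w)) -
        (lform z w + fderiv ℝ u z w)) :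
    ∃ c, ∀ z ∈ Disk, A' z = A z + (u (f.toFun z) - u z) + c := by
  set g : ℂ → ℝ := fun z => A' z - (A z + (u (f.toFun z) - u z))
  have hg : ∀ z ∈ Disk, HasFDerivWithinAt g (0 : ℂ →L[ℝ] ℝ) Disk z := by
    intro z hz
    have hf := ((f.contDiffOn.differentiableOn one_ne_zero) z hz).hasFDerivWithinAt
    have hAz := ((hA.1.differentiableOn one_ne_zero) z hz).hasFDerivWithinAt
    refine ((hA'd z hz).hasFDerivWithinAt.sub
      (hAz.add (((hu _).hasFDerivAt.comp_hasFDerivWithinAt z hf).sub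
        (hu z).hasFDerivAt.hasFDerivWithinAt))).congr_fderiv ?_
    ext w
    simp only [sub_apply, add_apply, ContinuousLinearMap.comp_apply, zero_apply, hA.2 z hz w,
      hA' z hz w]
    ring
  have h0 : (0 : ℂ) ∈ Disk := mem_closedBall_self zero_le_one
  refine ⟨g 0, fun z hz => ?_⟩
  have := (convex_closedBall (0 : ℂ) 1).is_const_of_hasFDerivWithinAt_zero hg hz h0
  simp only [g] at this
  linarith

namespace IsInvariantCircleMeasure

variable {f : SympDiff} {μ : Measure ℂ}

theorem restrict_disk (hμ : IsInvariantCircleMeasure f μ) : μ.restrict Disk = μ :=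
  Measure.restrict_eq_self_of_ae_mem <|
    measure_mono_null (compl_subset_compl.2 sphere_subset_closedBall) hμ.2.1

theorem setIntegral_comp (hμ : IsInvariantCircleMeasure f μ) {u : ℂ → ℝ} (hu : Continuous u) :
    ∫ z in Disk, u (f.toFun z) ∂μ = ∫ z in Disk, u z ∂μ := by
  have hf : AEMeasurable f.toFun μ := by
    simpa only [hμ.restrict_disk] using
      f.contDiffOn.continuousOn.aemeasurable (μ := μ) measurableSet_disk
  rw [hμ.restrict_disk, ← integral_map hf hu.aestronglyMeasurable, hμ.2.2]

end IsInvariantCircleMeasure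

/-- The Calabi invariant does not depend on the choice of the
Liouville form `λ' = λ + du`. -/
theorem cal_indep_liouville (f : SympDiff) (u : ℂ → ℝ) (hu : ContDiff ℝ 1 u)
    (A A' : ℂ → ℝ)
    (hA : IsAction f A)
    (hA'smooth : ContDiffOn ℝ 1 A' Disk)
    (hA' : ∀ z ∈ Disk, ∀ w : ℂ,
      fderivWithin ℝ A' Disk z w =
        (lform (f.toFun z) (fderivWithin ℝ f.toFun Disk z w) +
          fderiv ℝ u (f.toFun z) (fderivWithin ℝ f.toFun Disk z w)) -
        (lform z w + fderiv ℝ u z w))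
    (μ : Measure ℂ) (hμ : IsInvariantCircleMeasure f μ)
    (hAμ : ∫ z, A z ∂μ = 0) (hA'μ : ∫ z, A' z ∂μ = 0) :
    ∫ z in Disk, A z = ∫ z in Disk, A' z := by
  have := hμ.1
  obtain ⟨c, hc⟩ := hA.exists_eqOn_add_comp_sub_add_const (hu.differentiable one_ne_zero)
    (hA'smooth.differentiableOn one_ne_zero) hA'
  have hc0 : c = 0 := by
    have hAc : ContinuousOn (fun z => A z + c) Disk := hA.1.continuousOn.add continuousOn_const
    have hA'c : ∫ z in Disk, A' z ∂μ = ∫ z in Disk, A z + c ∂μ := by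
      rw [← f.setIntegral_add_comp_sub hAc hu.continuous (hμ.setIntegral_comp hu.continuous)]
      exact setIntegral_congr_fun measurableSet_disk fun z hz => by rw [hc z hz]; ring
    rw [integral_add (hA.1.continuousOn.integrableOn_compact isCompact_disk)
      (integrable_const c), integral_const, hμ.restrict_disk, hAμ, hA'μ] at hA'c
    simpa using hA'c.symm
  calc ∫ z in Disk, A z = ∫ z in Disk, A z + (u (f.toFun z) - u z) :=
        (f.setIntegral_add_comp_sub hA.1.continuousOn hu.continuous (f.setIntegral_comp u)).symm
    _ = ∫ z in Disk, A' z :=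
        setIntegral_congr_fun measurableSet_disk fun z hz => by rw [hc z hz, hc0, add_zero]
end
end

section
/- Let 0 < ε ≤ 1/2 and let f : D → ℝ² be a map satisfying ‖(f(y) − f(x)) − (y − x)‖ ≤ ε‖y − x‖ for all x, y ∈ D (this holds in particular when f is C¹ on D with ‖Df_z − Id‖ ≤ ε for all z ∈ D). Then for all x ≠ y in D one has f(x) ≠ f(y) and |⟨(f(y) − f(x))/‖f(y) − f(x)‖, (y − x)/‖y − x‖⟩ − 1| ≤ 2ε. -/
open MeasureTheory Metric Set Filter Topology
open scoped Real

noncomputable section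

/-!
Write `u = y - x` and `v = f y - f x`, so `‖v - u‖ ≤ ε ‖u‖`. Rescaling `v` to length `‖u‖` moves
it by `|‖v‖ - ‖u‖| ≤ ‖v - u‖`, so the unit vectors `û, v̂` satisfy `‖û - v̂‖ ≤ 2ε`. For unit
vectors `1 - ⟪û, v̂⟫ = ‖û - v̂‖² / 2`, hence the cosine is within `2ε² ≤ 2ε` of `1`.
-/

namespace NormedSpace

variable {V : Type*} [NormedAddCommGroup V] [NormedSpace ℝ V]

lemma norm_normalize_le_one (x : V) : ‖normalize x‖ ≤ 1 := by
  rcases eq_or_ne x 0 with rfl | hx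
  · simp
  · exact (norm_normalize hx).le

lemma norm_mul_norm_normalize_sub_le (u v : V) :
    ‖u‖ * ‖normalize v - normalize u‖ ≤ 2 * ‖v - u‖ := by
  have hsplit : ‖u‖ • (normalize v - normalize u) = (‖u‖ - ‖v‖) • normalize v + (v - u) := by
    rw [smul_sub, sub_smul, norm_smul_normalize, norm_smul_normalize]
    abel
  have hscale : ‖(‖u‖ - ‖v‖) • normalize v‖ ≤ ‖v - u‖ :=
    calc ‖(‖u‖ - ‖v‖) • normalize v‖ = |‖u‖ - ‖v‖| * ‖normalize v‖ := by
          rw [norm_smul, Real.norm_eq_abs]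
      _ ≤ |‖u‖ - ‖v‖| * 1 := by gcongr; exact norm_normalize_le_one v
      _ ≤ ‖v - u‖ := by rw [mul_one, norm_sub_rev v u]; exact abs_norm_sub_norm_le u v
  calc ‖u‖ * ‖normalize v - normalize u‖ = ‖‖u‖ • (normalize v - normalize u)‖ := by
        rw [norm_smul, norm_norm]
    _ ≤ ‖(‖u‖ - ‖v‖) • normalize v‖ + ‖v - u‖ := hsplit ▸ norm_add_le _ _
    _ ≤ 2 * ‖v - u‖ := by linarith

end NormedSpace

lemma ne_zero_of_norm_sub_le_mul_norm {E : Type*} [NormedAddCommGroup E] {u v : E} {ε : ℝ}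
    (hε : ε < 1) (hu : u ≠ 0) (h : ‖v - u‖ ≤ ε * ‖u‖) : v ≠ 0 := by
  rintro rfl
  rw [zero_sub, norm_neg] at h
  nlinarith [norm_pos_iff.2 hu]

section InnerProductSpace

open scoped InnerProductSpace
open NormedSpace (normalize norm_normalize norm_mul_norm_normalize_sub_le)

variable {E : Type*} [NormedAddCommGroup E] [InnerProductSpace ℝ E]

lemma real_inner_eq_one_sub_norm_sub_sq_div_two {a b : E} (ha : ‖a‖ = 1) (hb : ‖b‖ = 1) :
    ⟪a, b⟫_ℝ = 1 - ‖a - b‖ ^ 2 / 2 := by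
  rw [norm_sub_sq_real, ha, hb]
  ring

lemma abs_real_inner_normalize_sub_one_le {u v : E} {ε : ℝ} (hε : ε < 1) (hu : u ≠ 0)
    (h : ‖v - u‖ ≤ ε * ‖u‖) : |⟪normalize u, normalize v⟫_ℝ - 1| ≤ 2 * ε ^ 2 := by
  have hv := ne_zero_of_norm_sub_le_mul_norm hε hu h
  have hnu : 0 < ‖u‖ := norm_pos_iff.2 hu
  have hdist : ‖normalize u - normalize v‖ ≤ 2 * ε := by
    have hscaled := norm_mul_norm_normalize_sub_le u v
    rw [norm_sub_rev (normalize v)] at hscaled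
    exact le_of_mul_le_mul_left (by linarith) hnu
  rw [real_inner_eq_one_sub_norm_sub_sq_div_two (norm_normalize hu) (norm_normalize hv),
    sub_sub_cancel_left, abs_neg, abs_of_nonneg (by positivity)]
  nlinarith [norm_nonneg (normalize u - normalize v)]

end InnerProductSpace

lemma Complex.normalize_eq_div_norm (z : ℂ) : NormedSpace.normalize z = z / ‖z‖ := by
  rw [NormedSpace.normalize, Complex.real_smul, Complex.ofReal_inv, div_eq_inv_mul]

/-- If `f` moves differences by at most `ε ≤ 1/2` relatively, then the
cosine of the angle between `f(y) - f(x)` and `y - x` is `2ε`-close to `1`. -/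
theorem cos_angle_close_C1 (ε : ℝ) (hε0 : 0 < ε) (hε : ε ≤ 1 / 2) (f : ℂ → ℂ)
    (hf : ∀ x ∈ Disk, ∀ y ∈ Disk, ‖(f y - f x) - (y - x)‖ ≤ ε * ‖y - x‖) :
    ∀ x ∈ Disk, ∀ y ∈ Disk, x ≠ y →
      f x ≠ f y ∧
      |(((f y - f x) / (‖f y - f x‖ : ℂ)) *
          (starRingEnd ℂ) ((y - x) / (‖y - x‖ : ℂ))).re - 1| ≤ 2 * ε := by
  intro x hx y hy hxy
  have hε1 : ε < 1 := by linarith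
  have hu : y - x ≠ 0 := sub_ne_zero.2 hxy.symm
  have hclose := hf x hx y hy
  have hv := ne_zero_of_norm_sub_le_mul_norm hε1 hu hclose
  refine ⟨fun hfxy => hv (by rw [hfxy, sub_self]), ?_⟩
  rw [← Complex.normalize_eq_div_norm, ← Complex.normalize_eq_div_norm, ← Complex.inner]
  calc _ ≤ 2 * ε ^ 2 := abs_real_inner_normalize_sub_one_le hε1 hu hclose
    _ ≤ 2 * ε := by nlinarith
end
end

section
/- Let 0 < ε ≤ 1/2 and let f : D → ℝ² ≅ ℂ be a map satisfying ‖(f(y) − f(x)) − (y − x)‖ ≤ ε‖y − x‖ for all x, y ∈ D (so f(x) ≠ f(y) whenever x ≠ y). Let A : {(x,y) ∈ D×D : x ≠ y} → ℝ be a continuous function such that exp(2πi·A(x,y)) = (f(y)−f(x))·conj(y−x) / (‖f(y)−f(x)‖·‖y−x‖) for all x ≠ y, and assume |A(x₀,y₀)| < 1/2 for at least one pair x₀ ≠ y₀ in D. Then |A(x,y)| ≤ √(2ε)/π for all x ≠ y in D. -/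
open MeasureTheory Metric Set Filter Topology
open scoped Real

noncomputable section

/-! The hypothesis makes `f y - f x` a relative `ε`-perturbation of `y - x`, which forces
`2 sin² (π A) ≤ ε²`; in particular `A` never takes the values `±1/2`. The off-diagonal of the
disk is connected, so the continuous `A` stays in `(-1/2, 1/2)` once it does at one pair, and
there Jordan's inequality `2 |t| ≤ |sin (π t)|` turns the sine bound into
`|A| ≤ ε / (2√2) ≤ √(2ε)/π`. -/

theorem Convex.segment_subset_offDiag {E : Type*} [AddCommGroup E] [Module ℝ E] {s : Set E}
    (hs : Convex ℝ s) {p q : E × E} (hp : p ∈ s.offDiag) (hq₁ : q.1 ∈ s) (hq₂ : q.2 ∈ s)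
    {c : ℝ} (hc : 0 < c) (hpq : q.2 - q.1 = c • (p.2 - p.1)) : segment ℝ p q ⊆ s.offDiag := by
  obtain ⟨hp₁, hp₂, hp⟩ := hp
  rintro _ ⟨a, b, ha, hb, hab, rfl⟩
  refine ⟨hs hp₁ hq₁ ha hb hab, hs hp₂ hq₂ ha hb hab, fun h => ?_⟩
  have hdiff : (a • p + b • q).2 - (a • p + b • q).1 = (a + b * c) • (p.2 - p.1) := by
    simp only [Prod.snd_add, Prod.fst_add, Prod.smul_fst, Prod.smul_snd]
    rw [add_smul, mul_smul, ← hpq]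
    simp only [smul_sub]
    abel
  have hcoef : a + b * c ≠ 0 := by
    rcases hb.eq_or_lt with rfl | hb
    · linarith
    · nlinarith [mul_pos hb hc]
  rw [h, sub_self, eq_comm, smul_eq_zero] at hdiff
  exact hdiff.elim hcoef (sub_ne_zero.mpr (Ne.symm hp))

/-- Every off-diagonal pair `p` is joined, by a segment along which the difference stays a
positive multiple of `p.2 - p.1`, to a pair `(x - r • v, x + r • v)` with `‖v‖ = 1`; these pairs
form a continuous image of the unit sphere. -/
theorem isPathConnected_offDiag_closedBall {E : Type*} [NormedAddCommGroup E] [NormedSpace ℝ E]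
    (h : 1 < Module.rank ℝ E) (x : E) {r : ℝ}
    (hr : 0 < r) : IsPathConnected (closedBall x r).offDiag := by
  set e : E → E × E := fun v => (x - r • v, x + r • v)
  have he : MapsTo e (sphere 0 1) (closedBall x r).offDiag := by
    intro v hv
    have hv : ‖v‖ = 1 := by simpa using hv
    refine ⟨?_, ?_, ?_⟩
    · simp [e, norm_smul, hv, abs_of_pos hr]
    · simp [e, norm_smul, hv, abs_of_pos hr]
    · intro hxv
      have h2r : (x + r • v) - (x - r • v) = (2 * r) • v := by rw [two_mul, add_smul]; abel
      rw [← show x - r • v = x + r • v from hxv, sub_self, eq_comm, smul_eq_zero] at h2r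
      rcases h2r with h0 | rfl
      · linarith
      · simp at hv
  have hC : IsPathConnected (e '' sphere 0 1) :=
    (isPathConnected_sphere h 0 zero_le_one).image (by fun_prop)
  have hjoin : ∀ p ∈ (closedBall x r).offDiag, ∃ q ∈ e '' sphere 0 1,
      JoinedIn (closedBall x r).offDiag p q := by
    intro p hp
    have hd : p.2 - p.1 ≠ 0 := sub_ne_zero.mpr (Ne.symm hp.2.2)
    set v := ‖p.2 - p.1‖⁻¹ • (p.2 - p.1)
    have hv : v ∈ sphere (0 : E) 1 := by simp [v, norm_smul, hd]
    obtain ⟨hq₁, hq₂, -⟩ := he hv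
    refine ⟨e v, mem_image_of_mem e hv, JoinedIn.of_segment_subset
      ((convex_closedBall x r).segment_subset_offDiag hp hq₁ hq₂ (c := 2 * r * ‖p.2 - p.1‖⁻¹)
        (by positivity) ?_)⟩
    simp only [e, v, mul_smul]
    rw [two_smul]; abel
  rw [isPathConnected_iff]
  refine ⟨hC.nonempty.mono he.image_subset, fun p hp q hq => ?_⟩
  obtain ⟨p', hp', hpp'⟩ := hjoin p hp
  obtain ⟨q', hq', hqq'⟩ := hjoin q hq
  exact hpp'.trans (((hC.joinedIn p' hp' q' hq').mono he.image_subset).trans hqq'.symm)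

theorem IsPreconnected.forall_abs_lt_of_abs_ne {X : Type*} [TopologicalSpace X] {s : Set X}
    (hs : IsPreconnected s) {g : X → ℝ} (hg : ContinuousOn g s) {c : ℝ}
    (hc : ∀ p ∈ s, |g p| ≠ c) {p₀ : X} (hp₀ : p₀ ∈ s) (h₀ : |g p₀| < c) :
    ∀ p ∈ s, |g p| < c := by
  intro p hp
  by_contra! hle
  obtain ⟨q, hq, hqc⟩ := hs.intermediate_value hp₀ hp hg.abs ⟨h₀.le, hle⟩
  exact hc q hq hqc

theorem Complex.norm_exp_two_pi_I_mul_ofReal_sub_one (t : ℝ) :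
    ‖Complex.exp (2 * Real.pi * Complex.I * t) - 1‖ = 2 * |Real.sin (Real.pi * t)| := by
  have h := Complex.norm_exp_I_mul_ofReal_sub_one (2 * Real.pi * t)
  rw [show 2 * Real.pi * t / 2 = Real.pi * t by ring, norm_mul, Real.norm_eq_abs,
    Real.norm_eq_abs, abs_two] at h
  rw [← h]
  congr 3
  push_cast
  ring

theorem Complex.norm_mul_conj_div_sub_one_sq_mul_le (a b : ℂ) :
    ‖a * starRingEnd ℂ b / ((‖a‖ : ℂ) * (‖b‖ : ℂ)) - 1‖ ^ 2 * (‖a‖ * ‖b‖) ≤ ‖a - b‖ ^ 2 := by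
  rcases eq_or_ne a 0 with rfl | ha
  · simp
  rcases eq_or_ne b 0 with rfl | hb
  · simp
  have hr : 0 < ‖a‖ * ‖b‖ := by positivity
  rw [← Complex.ofReal_mul]
  have hunit : ‖a * starRingEnd ℂ b / ((‖a‖ * ‖b‖ : ℝ) : ℂ)‖ = 1 := by
    rw [norm_div, norm_mul, Complex.norm_conj, Complex.norm_real, Real.norm_of_nonneg hr.le,
      div_self hr.ne']
  rw [Complex.sq_norm, Complex.normSq_sub, ← Complex.sq_norm, ← Complex.sq_norm, hunit, norm_one,
    Complex.sq_norm (a - b), Complex.normSq_sub, ← Complex.sq_norm, ← Complex.sq_norm, map_one,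
    mul_one, Complex.div_ofReal_re]
  field_simp
  -- the two sides differ by `(‖a‖ - ‖b‖) ^ 2`
  nlinarith [sq_nonneg (‖a‖ - ‖b‖)]

theorem Real.two_mul_abs_le_abs_sin_pi_mul {t : ℝ} (ht : |t| ≤ 1 / 2) :
    2 * |t| ≤ |Real.sin (Real.pi * t)| := by
  have hπ := Real.pi_pos
  have h := Real.mul_le_sin (x := |Real.pi * t|) (abs_nonneg _)
    (by rw [abs_mul, abs_of_pos hπ]; nlinarith)
  rw [← Real.abs_sin_eq_sin_abs_of_abs_le_pi (by rw [abs_mul, abs_of_pos hπ]; nlinarith),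
    abs_mul, abs_of_pos hπ] at h
  calc 2 * |t| = 2 / Real.pi * (Real.pi * |t|) := by field_simp
    _ ≤ _ := h

theorem two_mul_sin_sq_le_of_norm_sub_le {ε t : ℝ} {a b : ℂ} (hε : ε ≤ 1 / 2) (hb : b ≠ 0)
    (hab : ‖a - b‖ ≤ ε * ‖b‖)
    (ht : Complex.exp (2 * Real.pi * Complex.I * t) =
      a * starRingEnd ℂ b / ((‖a‖ : ℂ) * (‖b‖ : ℂ))) :
    2 * Real.sin (Real.pi * t) ^ 2 ≤ ε ^ 2 := by
  have hb' : 0 < ‖b‖ := norm_pos_iff.mpr hb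
  have hba : ‖b‖ ≤ 2 * ‖a‖ := by
    nlinarith [norm_sub_norm_le b a, norm_sub_rev a b]
  have ha : 0 < ‖a‖ := by linarith
  have hsin : (2 * |Real.sin (Real.pi * t)|) ^ 2 * (‖a‖ * ‖b‖) ≤ ‖a - b‖ ^ 2 := by
    rw [← Complex.norm_exp_two_pi_I_mul_ofReal_sub_one, ht]
    exact Complex.norm_mul_conj_div_sub_one_sq_mul_le a b
  have hsq : ‖a - b‖ ^ 2 ≤ ε ^ 2 * ‖b‖ ^ 2 := by
    rw [← mul_pow]; exact pow_le_pow_left₀ (norm_nonneg _) hab 2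
  rw [mul_pow, sq_abs] at hsin
  have : 2 * Real.sin (Real.pi * t) ^ 2 * (2 * ‖a‖ * ‖b‖) ≤ ε ^ 2 * (2 * ‖a‖ * ‖b‖) := by
    nlinarith [sq_nonneg ε]
  exact le_of_mul_le_mul_right this (by positivity)

theorem abs_le_sqrt_div_pi_of_two_mul_sin_sq_le {ε t : ℝ} (hε₀ : 0 ≤ ε) (hε₁ : ε ≤ 1)
    (ht : |t| ≤ 1 / 2) (hsin : 2 * Real.sin (Real.pi * t) ^ 2 ≤ ε ^ 2) :
    |t| ≤ Real.sqrt (2 * ε) / Real.pi := by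
  have hj := Real.two_mul_abs_le_abs_sin_pi_mul ht
  have hj2 : (2 * |t|) ^ 2 ≤ Real.sin (Real.pi * t) ^ 2 := by
    rw [← sq_abs (Real.sin _)]; exact pow_le_pow_left₀ (by positivity) hj 2
  rw [le_div_iff₀ Real.pi_pos, Real.le_sqrt (by positivity) (by positivity)]
  calc (|t| * Real.pi) ^ 2 = |t| ^ 2 * Real.pi ^ 2 := by ring
    _ ≤ |t| ^ 2 * 4 ^ 2 := by gcongr; exact Real.pi_le_four
    _ = 4 * (2 * |t|) ^ 2 := by ring
    _ ≤ 2 * ε ^ 2 := by linarith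
    _ ≤ 2 * ε := by nlinarith

/-- If `f` moves differences by at most `ε ≤ 1/2` relatively, then any
continuous determination `A` of the angle function which is smaller than `1/2` at one
pair satisfies `|A| ≤ √(2ε)/π` everywhere. -/
theorem angle_small_C1 (ε : ℝ) (hε0 : 0 < ε) (hε : ε ≤ 1 / 2) (f : ℂ → ℂ)
    (hf : ∀ x ∈ Disk, ∀ y ∈ Disk, ‖(f y - f x) - (y - x)‖ ≤ ε * ‖y - x‖)
    (A : ℂ × ℂ → ℝ)
    (hAcont : ContinuousOn A {p : ℂ × ℂ | p.1 ∈ Disk ∧ p.2 ∈ Disk ∧ p.1 ≠ p.2})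
    (hAang : ∀ x ∈ Disk, ∀ y ∈ Disk, x ≠ y →
      Complex.exp (2 * Real.pi * Complex.I * (A (x, y) : ℂ)) =
        ((f y - f x) * (starRingEnd ℂ) (y - x)) /
          ((‖f y - f x‖ : ℂ) * (‖y - x‖ : ℂ)))
    (x₀ y₀ : ℂ) (hx₀ : x₀ ∈ Disk) (hy₀ : y₀ ∈ Disk) (hne₀ : x₀ ≠ y₀)
    (hsmall : |A (x₀, y₀)| < 1 / 2) :
    ∀ x ∈ Disk, ∀ y ∈ Disk, x ≠ y →
      |A (x, y)| ≤ Real.sqrt (2 * ε) / Real.pi := by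
  have hsin : ∀ p ∈ Disk.offDiag, 2 * Real.sin (Real.pi * A p) ^ 2 ≤ ε ^ 2 :=
    fun p ⟨hp₁, hp₂, hp⟩ => two_mul_sin_sq_le_of_norm_sub_le hε
      (sub_ne_zero.mpr (Ne.symm hp)) (hf p.1 hp₁ p.2 hp₂) (hAang p.1 hp₁ p.2 hp₂ hp)
  have hhalf : ∀ p ∈ Disk.offDiag, |A p| ≠ 1 / 2 := by
    intro p hp hA
    have h := hsin p hp
    rcases (abs_eq (by norm_num)).mp hA with hA | hA <;>
      simp only [hA, mul_neg, Real.sin_neg, mul_one_div, Real.sin_pi_div_two] at h <;> nlinarith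
  have hconn : IsPathConnected Disk.offDiag :=
    isPathConnected_offDiag_closedBall (by rw [Complex.rank_real_complex]; norm_num) 0 one_pos
  have hlt := hconn.isConnected.isPreconnected.forall_abs_lt_of_abs_ne hAcont hhalf
    ⟨hx₀, hy₀, hne₀⟩ hsmall
  intro x hx y hy hxy
  exact abs_le_sqrt_div_pi_of_two_mul_sin_sq_le hε0.le (by linarith)
    (hlt (x, y) ⟨hx, hy, hxy⟩).le (hsin (x, y) ⟨hx, hy, hxy⟩)
end
end

section
/- Let 0 < ε < 1/16 and let f : D → ℝ² ≅ ℂ be a continuous injective map with ‖f(z) − z‖ ≤ ε for all z ∈ D. Let A : {(x,y) ∈ D×D : x ≠ y} → ℝ be a continuous function such that exp(2πi·A(x,y)) = (f(y)−f(x))·conj(y−x) / (‖f(y)−f(x)‖·‖y−x‖) for all x ≠ y. Then there exists a unique integer k ∈ ℤ such that |A(x,y) − k| ≤ 2·ε^{1/4}/π (< 1/2) for all x, y ∈ D with ‖x − y‖ ≥ √ε. -/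
open MeasureTheory Metric Set Filter Topology
open scoped Real

noncomputable section

/-! For `‖x - y‖ ≥ √ε` the chord `f y - f x` differs from `y - x` by at most `2ε`, so the angle
between them is at most `ε / ‖y - x‖ ≤ √ε` modulo `1`: `A (x, y)` lies within `√ε` of the integer
`round (A (x, y))`. This integer is therefore locally constant in `(x, y)`, hence constant, because
the pairs of points of `D` at distance at least `√ε` form a path-connected set. -/

open Complex in
theorem Complex.four_mul_abs_sub_round_le_norm_exp_sub_one (θ : ℝ) :
    4 * |θ - round θ| ≤ ‖exp (2 * π * I * θ) - 1‖ := by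
  set t := θ - round θ
  have hexp : exp (2 * π * I * θ) = exp (I * ↑(2 * π * t)) := by
    rw [show (θ : ℂ) = t + (round θ : ℤ) by simp [t], mul_add, exp_add,
      show 2 * π * I * ((round θ : ℤ) : ℂ) = (round θ : ℤ) * (2 * π * I) by ring,
      exp_int_mul_two_pi_mul_I, mul_one]
    push_cast
    ring_nf
  have hsin : 2 / π * |π * t| ≤ |Real.sin (π * t)| := by
    refine Real.mul_abs_le_abs_sin ?_
    rw [abs_mul, abs_of_pos Real.pi_pos]
    nlinarith [abs_sub_round θ, Real.pi_pos]
  rw [hexp, norm_exp_I_mul_ofReal_sub_one, show 2 * π * t / 2 = π * t by ring, norm_mul,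
    Real.norm_eq_abs, Real.norm_eq_abs, abs_two]
  rw [abs_mul, abs_of_pos Real.pi_pos, ← mul_assoc, div_mul_cancel₀ _ Real.pi_ne_zero] at hsin
  linarith

theorem norm_inv_norm_smul_sub_inv_norm_smul_le {E : Type*} [NormedAddCommGroup E]
    [NormedSpace ℝ E] (v : E) {w : E} (hw : w ≠ 0) :
    ‖‖v‖⁻¹ • v - ‖w‖⁻¹ • w‖ ≤ 2 * ‖v - w‖ / ‖w‖ := by
  have hw' : 0 < ‖w‖ := norm_pos_iff.2 hw
  rcases eq_or_ne v 0 with rfl | hv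
  · simp [norm_smul, hw'.ne']
  have hv' : 0 < ‖v‖ := norm_pos_iff.2 hv
  have hsplit : ‖v‖⁻¹ • v - ‖w‖⁻¹ • w = (‖v‖⁻¹ - ‖w‖⁻¹) • v + ‖w‖⁻¹ • (v - w) := by module
  have hscale : ‖(‖v‖⁻¹ - ‖w‖⁻¹) • v‖ = |‖w‖ - ‖v‖| / ‖w‖ := by
    rw [norm_smul, Real.norm_eq_abs, inv_sub_inv hv'.ne' hw'.ne', abs_div,
      abs_of_pos (mul_pos hv' hw')]
    field_simp
  calc ‖‖v‖⁻¹ • v - ‖w‖⁻¹ • w‖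
      ≤ ‖(‖v‖⁻¹ - ‖w‖⁻¹) • v‖ + ‖‖w‖⁻¹ • (v - w)‖ := hsplit ▸ norm_add_le _ _
    _ = |‖w‖ - ‖v‖| / ‖w‖ + ‖v - w‖ / ‖w‖ := by
      rw [hscale, norm_smul, norm_inv, norm_norm, inv_mul_eq_div]
    _ ≤ ‖v - w‖ / ‖w‖ + ‖v - w‖ / ‖w‖ := by
      gcongr
      rw [abs_sub_comm]
      exact abs_norm_sub_norm_le v w
    _ = 2 * ‖v - w‖ / ‖w‖ := by ring

open Complex ComplexConjugate in
theorem Complex.norm_mul_conj_div_sub_one {v w : ℂ} (hw : w ≠ 0) :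
    ‖v * conj w / (‖v‖ * ‖w‖) - 1‖ = ‖‖v‖⁻¹ • v - ‖w‖⁻¹ • w‖ := by
  have hw' : (‖w‖ : ℂ) ≠ 0 := by exact_mod_cast norm_ne_zero_iff.2 hw
  have hunit : conj w * w = ‖w‖ ^ 2 := by
    rw [mul_comm, mul_conj, normSq_eq_norm_sq]; push_cast; rfl
  have key :
      v * conj w / (‖v‖ * ‖w‖) - 1 = conj (‖w‖⁻¹ • w) * (‖v‖⁻¹ • v - ‖w‖⁻¹ • w) := by
    simp only [real_smul, map_mul, map_inv₀, conj_ofReal, ofReal_inv]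
    rcases eq_or_ne v 0 with rfl | hv
    · field_simp; linear_combination hunit
    have hv' : (‖v‖ : ℂ) ≠ 0 := by exact_mod_cast norm_ne_zero_iff.2 hv
    field_simp
    linear_combination (‖v‖ : ℂ) * hunit
  rw [key, norm_mul, RCLike.norm_conj, norm_smul, norm_inv, norm_norm,
    inv_mul_cancel₀ (norm_ne_zero_iff.2 hw), one_mul]

open ComplexConjugate in
theorem abs_sub_round_le_of_exp_eq {a : ℝ} {v w : ℂ} (hw : w ≠ 0)
    (ha : Complex.exp (2 * π * Complex.I * a) = v * conj w / (‖v‖ * ‖w‖)) :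
    |a - round a| ≤ ‖v - w‖ / (2 * ‖w‖) := by
  have hw' : 0 < ‖w‖ := norm_pos_iff.2 hw
  have h : 4 * |a - round a| ≤ 2 * ‖v - w‖ / ‖w‖ :=
    calc 4 * |a - round a| ≤ ‖Complex.exp (2 * π * Complex.I * a) - 1‖ :=
          Complex.four_mul_abs_sub_round_le_norm_exp_sub_one a
      _ = ‖‖v‖⁻¹ • v - ‖w‖⁻¹ • w‖ := by rw [ha, Complex.norm_mul_conj_div_sub_one hw]
      _ ≤ 2 * ‖v - w‖ / ‖w‖ := norm_inv_norm_smul_sub_inv_norm_smul_le v hw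
  rw [le_div_iff₀ hw'] at h
  rw [le_div_iff₀ (by positivity)]
  linarith

open ComplexConjugate in
theorem abs_sub_round_le_of_exp_eq_of_norm_sub_le {ε a : ℝ} {f : ℂ → ℂ} {x y : ℂ}
    (hx : ‖f x - x‖ ≤ ε) (hy : ‖f y - y‖ ≤ ε) (hxy : x ≠ y)
    (ha : Complex.exp (2 * π * Complex.I * a) =
      (f y - f x) * conj (y - x) / (‖f y - f x‖ * ‖y - x‖)) :
    |a - round a| ≤ ε / ‖y - x‖ := by
  have hyx : 0 < ‖y - x‖ := norm_pos_iff.2 (sub_ne_zero.2 hxy.symm)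
  calc |a - round a| ≤ ‖(f y - f x) - (y - x)‖ / (2 * ‖y - x‖) :=
        abs_sub_round_le_of_exp_eq (sub_ne_zero.2 hxy.symm) ha
    _ ≤ (2 * ε) / (2 * ‖y - x‖) := by
        gcongr
        rw [show (f y - f x) - (y - x) = (f y - y) - (f x - x) by ring]
        linarith [norm_sub_le (f y - y) (f x - x)]
    _ = ε / ‖y - x‖ := by field_simp

section FarPairs

variable {E : Type*} [NormedAddCommGroup E] [NormedSpace ℝ E]

def farPairs (r : ℝ) : Set (E × E) :=
  {p | p.1 ∈ closedBall 0 1 ∧ p.2 ∈ closedBall 0 1 ∧ r ≤ ‖p.1 - p.2‖}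

theorem joinedIn_farPairs_antipodal {r : ℝ} {p : E × E} (hp : p ∈ farPairs r) :
    JoinedIn (farPairs r) p ((2 : ℝ)⁻¹ • (p.1 - p.2), -((2 : ℝ)⁻¹ • (p.1 - p.2))) := by
  obtain ⟨hx, hy, hr⟩ := hp
  set d : E := (2 : ℝ)⁻¹ • (p.1 - p.2)
  have hd : d ∈ closedBall (0 : E) 1 := by
    rw [mem_closedBall_zero_iff] at *
    calc ‖d‖ ≤ 2⁻¹ * (‖p.1‖ + ‖p.2‖) := by
          rw [norm_smul, Real.norm_of_nonneg (by norm_num)]; gcongr; exact norm_sub_le _ _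
      _ ≤ 1 := by linarith
  refine JoinedIn.of_segment_subset fun z hz => ?_
  have hdiff : z.1 - z.2 = p.1 - p.2 := by
    have := image_segment ℝ ((LinearMap.fst ℝ E E - LinearMap.snd ℝ E E).toAffineMap) p (d, -d)
    have hd2 : d - -d = p.1 - p.2 := by simp only [d, sub_neg_eq_add, ← two_smul ℝ]; module
    simp only [LinearMap.coe_toAffineMap, LinearMap.sub_apply, LinearMap.coe_fst,
      LinearMap.coe_snd, hd2, segment_same] at this
    exact this.subset (mem_image_of_mem _ hz)
  obtain ⟨hz1, hz2⟩ := Prod.segment_subset p (d, -d) hz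
  exact ⟨(convex_closedBall 0 1).segment_subset hx hd hz1,
    (convex_closedBall 0 1).segment_subset hy (by simpa using hd) hz2, hdiff ▸ hr⟩

theorem isPathConnected_farPairs (hE : 1 < Module.rank ℝ E) {r : ℝ} (hr0 : 0 < r)
    (hr2 : r ≤ 2) : IsPathConnected (farPairs r : Set (E × E)) := by
  set K : Set (E × E) :=
    (fun q : ℝ × E => (q.1 • q.2, -(q.1 • q.2))) '' (Icc (r / 2) 1 ×ˢ sphere 0 1)
  have hK : IsPathConnected K :=
    (((convex_Icc _ _).isPathConnected (nonempty_Icc.2 (by linarith))).prod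
      (isPathConnected_sphere hE 0 zero_le_one)).image (by fun_prop)
  have hKsub : K ⊆ farPairs r := by
    rintro _ ⟨⟨s, u⟩, ⟨⟨hs1, hs2⟩, hu⟩, rfl⟩
    rw [mem_sphere_zero_iff_norm] at hu
    have hsu : ‖s • u‖ = s := by rw [norm_smul, hu, mul_one, Real.norm_of_nonneg (by linarith)]
    refine ⟨?_, ?_, ?_⟩
    · simpa [hsu] using hs2
    · simpa [hsu] using hs2
    · rw [sub_neg_eq_add, ← two_smul ℝ, norm_smul, hsu, Real.norm_two]
      linarith
  have hantipodal_mem : ∀ d : E, (d, -d) ∈ farPairs r → (d, -d) ∈ K := by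
    rintro d ⟨hd, -, hr⟩
    rw [mem_closedBall_zero_iff] at hd
    rw [sub_neg_eq_add, ← two_smul ℝ, norm_smul, Real.norm_two] at hr
    have hd0 : ‖d‖ ≠ 0 := by linarith
    refine ⟨(‖d‖, ‖d‖⁻¹ • d), ⟨⟨by linarith, hd⟩, ?_⟩, ?_⟩
    · rw [mem_sphere_zero_iff_norm, norm_smul, norm_inv, norm_norm, inv_mul_cancel₀ hd0]
    · simp only [smul_smul, mul_inv_cancel₀ hd0, one_smul]
  obtain ⟨b, hbK, hb⟩ := hK
  refine ⟨b, hKsub hbK, fun {p} hp => ?_⟩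
  have hq := joinedIn_farPairs_antipodal hp
  exact ((hb (hantipodal_mem _ hq.target_mem)).mono hKsub).trans hq.symm

end FarPairs

theorem round_eq_of_abs_sub_lt_half {x : ℝ} {n : ℤ} (h : |x - n| < 1 / 2) : round x = n := by
  rw [round_eq_iff]
  constructor <;> linarith [abs_lt.1 h]

theorem continuousAt_round_of_abs_sub_round_lt_half {x : ℝ} (hx : |x - round x| < 1 / 2) :
    ContinuousAt (round : ℝ → ℤ) x := by
  refine (continuousAt_const (y := round x)).congr ?_
  filter_upwards [eventually_abs_sub_lt x (sub_pos.2 hx)] with y hy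
  refine (round_eq_of_abs_sub_lt_half ?_).symm
  calc |y - round x| ≤ |y - x| + |x - round x| := abs_sub_le _ _ _
    _ < 1 / 2 := by linarith

theorem IsPreconnected.round_comp_eq {X : Type*} [TopologicalSpace X] {S : Set X}
    (hS : IsPreconnected S) {g : X → ℝ} (hg : ContinuousOn g S)
    (hround : ∀ p ∈ S, |g p - round (g p)| < 1 / 2) {p q : X} (hp : p ∈ S) (hq : q ∈ S) :
    round (g p) = round (g q) :=
  hS.constant (f := fun p => round (g p)) (fun z hz =>
    (continuousAt_round_of_abs_sub_round_lt_half (hround z hz)).comp_continuousWithinAt (hg z hz))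
    hp hq

theorem sqrt_le_two_mul_rpow_quarter_div_pi_lt_half {ε : ℝ} (hε0 : 0 ≤ ε) (hε : ε < 1 / 16) :
    √ε ≤ 2 * ε ^ (1 / 4 : ℝ) / π ∧ 2 * ε ^ (1 / 4 : ℝ) / π < 1 / 2 := by
  set t := ε ^ (1 / 4 : ℝ)
  have ht0 : 0 ≤ t := by positivity
  have ht : t < 1 / 2 := by
    calc t < (1 / 16 : ℝ) ^ (1 / 4 : ℝ) := Real.rpow_lt_rpow hε0 hε (by norm_num)
      _ = 1 / 2 := by
        rw [show (1 / 16 : ℝ) = (1 / 2) ^ (4 : ℝ) by norm_num, ← Real.rpow_mul (by norm_num)]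
        norm_num
  have hsqrt : √ε = t * t := by
    rw [Real.sqrt_eq_rpow, ← Real.rpow_add' hε0 (by norm_num)]
    norm_num
  constructor
  · rw [hsqrt, le_div_iff₀ Real.pi_pos]
    nlinarith [Real.pi_le_four]
  · rw [div_lt_iff₀ Real.pi_pos]
    nlinarith [Real.pi_gt_three]

theorem angle_close_integer_C0_general (ε : ℝ) (hε0 : 0 < ε) (hε : ε < 1 / 16) (f : ℂ → ℂ)
    (hf : ∀ z ∈ Disk, ‖f z - z‖ ≤ ε)
    (A : ℂ × ℂ → ℝ)
    (hAcont : ContinuousOn A {p : ℂ × ℂ | p.1 ∈ Disk ∧ p.2 ∈ Disk ∧ p.1 ≠ p.2})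
    (hAang : ∀ x ∈ Disk, ∀ y ∈ Disk, x ≠ y →
      Complex.exp (2 * Real.pi * Complex.I * (A (x, y) : ℂ)) =
        ((f y - f x) * (starRingEnd ℂ) (y - x)) /
          ((‖f y - f x‖ : ℂ) * (‖y - x‖ : ℂ))) :
    2 * ε ^ ((1 : ℝ) / 4) / Real.pi < 1 / 2 ∧
      ∃! k : ℤ, ∀ x ∈ Disk, ∀ y ∈ Disk, Real.sqrt ε ≤ ‖x - y‖ →
        |A (x, y) - (k : ℝ)| ≤ 2 * ε ^ ((1 : ℝ) / 4) / Real.pi := by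
  obtain ⟨hsqrt_le, hbound⟩ := sqrt_le_two_mul_rpow_quarter_div_pi_lt_half hε0.le hε
  have hsqrt0 : 0 < √ε := Real.sqrt_pos.2 hε0
  set S : Set (ℂ × ℂ) := farPairs √ε
  have hS : IsPathConnected S := isPathConnected_farPairs
    (by rw [Complex.rank_real_complex]; norm_num) hsqrt0 (by linarith)
  have hSoff : S ⊆ {p : ℂ × ℂ | p.1 ∈ Disk ∧ p.2 ∈ Disk ∧ p.1 ≠ p.2} :=
    fun p ⟨hx, hy, hxy⟩ => ⟨hx, hy, fun h => by rw [h, sub_self, norm_zero] at hxy; linarith⟩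
  have hround : ∀ p ∈ S, |A p - round (A p)| ≤ √ε := by
    rintro ⟨x, y⟩ hp
    obtain ⟨hx, hy, hxy⟩ := hSoff hp
    calc |A (x, y) - round (A (x, y))| ≤ ε / ‖y - x‖ :=
          abs_sub_round_le_of_exp_eq_of_norm_sub_le (hf x hx) (hf y hy) hxy (hAang x hx y hy hxy)
      _ ≤ ε / √ε := by gcongr; exact norm_sub_rev x y ▸ hp.2.2
      _ = √ε := Real.div_sqrt
  have hconst : ∀ p ∈ S, ∀ q ∈ S, round (A p) = round (A q) := fun p hp q hq =>
    hS.isConnected.isPreconnected.round_comp_eq (hAcont.mono hSoff)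
      (fun p hp => (hround p hp).trans_lt (by linarith)) hp hq
  obtain ⟨p₀, hp₀, -⟩ := hS
  refine ⟨hbound, round (A p₀), fun x hx y hy hxy => ?_, fun k hk => ?_⟩
  · rw [← hconst (x, y) ⟨hx, hy, hxy⟩ p₀ hp₀]
    exact (hround (x, y) ⟨hx, hy, hxy⟩).trans hsqrt_le
  · exact (round_eq_of_abs_sub_lt_half
      ((hk p₀.1 hp₀.1 p₀.2 hp₀.2.1 hp₀.2.2).trans_lt hbound)).symm

/-- If `f` is `ε`-close to the identity (`ε < 1/16`), then there is a
unique integer `k` such that every continuous determination `A` of the angle function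
satisfies `|A(x,y) - k| ≤ 2 ε^{1/4}/π < 1/2` whenever `‖x - y‖ ≥ √ε`. -/
theorem angle_close_integer_C0 (ε : ℝ) (hε0 : 0 < ε) (hε : ε < 1 / 16) (f : ℂ → ℂ)
    (hfc : ContinuousOn f Disk) (hfinj : Set.InjOn f Disk)
    (hf : ∀ z ∈ Disk, ‖f z - z‖ ≤ ε)
    (A : ℂ × ℂ → ℝ)
    (hAcont : ContinuousOn A {p : ℂ × ℂ | p.1 ∈ Disk ∧ p.2 ∈ Disk ∧ p.1 ≠ p.2})
    (hAang : ∀ x ∈ Disk, ∀ y ∈ Disk, x ≠ y →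
      Complex.exp (2 * Real.pi * Complex.I * (A (x, y) : ℂ)) =
        ((f y - f x) * (starRingEnd ℂ) (y - x)) /
          ((‖f y - f x‖ : ℂ) * (‖y - x‖ : ℂ))) :
    2 * ε ^ ((1 : ℝ) / 4) / Real.pi < 1 / 2 ∧
      ∃! k : ℤ, ∀ x ∈ Disk, ∀ y ∈ Disk, Real.sqrt ε ≤ ‖x - y‖ →
        |A (x, y) - (k : ℝ)| ≤ 2 * ε ^ ((1 : ℝ) / 4) / Real.pi :=
  angle_close_integer_C0_general ε hε0 hε f hf A hAcont hAang
end
end
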